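/- arXiv:2305.05045 — 4 statements merged into one kernel-verified Lean document; each statement's English description precedes it below -/
import Mathlib

section
/- Let G be a graph, let C ⊆ G be a cycle, and let P = x…y ⊆ G be a path with both endpoints x, y on C. If ‖P‖ < d_C(x,y), where d_C(x,y) is the distance from x to y within the cycle C and ‖P‖ is the number of edges of P, then G contains a cycle C′ with |C|/2 < |C′| < |C| (lengths measured in number of vertices). -/
/-!
Shortcut the path `P`: if an inner vertex of `P` lies on `C`, then by the triangle inequality for
`d_C` one of the two subpaths of `P` is still shorter than the `C`-distance of its ends. Iterating,
we get a path `Q = x'…y'` meeting `C` only in its ends with `0 < ‖Q‖ < d_C(x', y')`. The vertices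
`x', y'` split `C` into two arcs, each longer than `Q`; closing `Q` with the longer arc gives a
cycle that is shorter than `C` (since `Q` is shorter than the other arc) and longer than `|C|/2`
(since the longer arc has at least half of the edges of `C`).
-/

namespace SimpleGraph

variable {V : Type*} {G : SimpleGraph V}

namespace Walk

lemma IsPath.start_notMem_tail_support {u v : V} {p : G.Walk u v} (hp : p.IsPath) :
    u ∉ p.support.tail :=
  (List.nodup_cons.mp (p.cons_tail_support ▸ hp.support_nodup)).1

lemma IsPath.isCycle_append_of_support_inter {u v : V} {p : G.Walk u v} {q : G.Walk v u}
    (hp : p.IsPath) (hq : q.IsPath) (hq₂ : 1 < q.length)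
    (h : ∀ w ∈ p.support, w ∈ q.support → w = u ∨ w = v) : (p.append q).IsCycle := by
  refine hp.isCycle_append hq (fun w hwp hwq => ?_) (Or.inr hq₂)
  rcases h w (List.mem_of_mem_tail hwp) (List.mem_of_mem_tail hwq) with rfl | rfl
  · exact hp.start_notMem_tail_support hwp
  · exact hq.start_notMem_tail_support hwq

lemma IsCycle.isPath_dropUntil [DecidableEq V] {u v : V} {c : G.Walk u u} (hc : c.IsCycle)
    (hv : v ∈ c.support) (hvu : v ≠ u) : (c.dropUntil v hv).IsPath := by
  rw [← c.take_spec hv] at hc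
  exact hc.isPath_of_append_right (not_nil_of_ne hvu.symm)

@[simp]
lemma length_mapToSubgraph {u v : V} (p : G.Walk u v) : p.mapToSubgraph.length = p.length := by
  induction p with
  | nil => rfl
  | cons _ p ih => exact congrArg (· + 1) ((length_map _ _).trans ih)

lemma dist_coe_le_length {H : G.Subgraph} {u v : V} (p : G.Walk u v) (hp : p.toSubgraph ≤ H)
    (hu : u ∈ H.verts) (hv : v ∈ H.verts) : H.coe.dist ⟨u, hu⟩ ⟨v, hv⟩ ≤ p.length := by
  have := dist_le (p.mapToSubgraph.map (Subgraph.inclusion hp))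
  rwa [length_map, length_mapToSubgraph] at this

end Walk

open Walk

theorem Subgraph.exists_isPath_shortcut {H : G.Subgraph} (hH : H.coe.Connected) {x y : V}
    (p : G.Walk x y) (hp : p.IsPath) (hx : x ∈ H.verts) (hy : y ∈ H.verts)
    (hshort : p.length < H.coe.dist ⟨x, hx⟩ ⟨y, hy⟩) :
    ∃ (x' y' : V) (hx' : x' ∈ H.verts) (hy' : y' ∈ H.verts) (q : G.Walk x' y'),
      q.IsPath ∧ q.length < H.coe.dist ⟨x', hx'⟩ ⟨y', hy'⟩ ∧
        ∀ v ∈ q.support, v ∈ H.verts → v = x' ∨ v = y' := by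
  induction hn : p.length using Nat.strong_induction_on generalizing x y with
  | _ n ih =>
  classical
  by_cases! hmid : ∀ v ∈ p.support, v ∈ H.verts → v = x ∨ v = y
  · exact ⟨x, y, hx, hy, p, hp, hshort, hmid⟩
  obtain ⟨v, hvp, hvH, hvx, hvy⟩ := hmid
  have hsum : (p.takeUntil v hvp).length + (p.dropUntil v hvp).length = n := by
    rw [← length_append, take_spec, hn]
  have htri := hH.dist_triangle (u := ⟨x, hx⟩) (v := ⟨v, hvH⟩) (w := ⟨y, hy⟩)
  by_cases htake : (p.takeUntil v hvp).length < H.coe.dist ⟨x, hx⟩ ⟨v, hvH⟩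
  · exact ih _ (hn ▸ p.length_takeUntil_lt_length hvp hvy) _ (hp.takeUntil hvp) hx hvH htake rfl
  · exact ih _ (hn ▸ p.length_dropUntil_lt_length hvp hvx) _ (hp.dropUntil hvp) hvH hy
      (by omega) rfl

/-- Stated for any `H` equal to `c.toSubgraph`, so that it applies to the rotations of `c`. -/
theorem Walk.IsCycle.exists_isCycle_of_isPath_shortcut {H : G.Subgraph} {u v : V}
    {c : G.Walk u u} (hc : c.IsCycle) (hcH : c.toSubgraph = H) (hu : u ∈ H.verts)
    (hv : v ∈ H.verts) {q : G.Walk u v} (hq : q.IsPath)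
    (hqc : q.length < H.coe.dist ⟨u, hu⟩ ⟨v, hv⟩)
    (hmeet : ∀ w ∈ q.support, w ∈ H.verts → w = u ∨ w = v) :
    ∃ c' : G.Walk u u, c'.IsCycle ∧ c.length < 2 * c'.length ∧ c'.length < c.length := by
  classical
  subst hcH
  have hvc : v ∈ c.support := c.mem_verts_toSubgraph.mp hv
  have hvu : v ≠ u := by
    rintro rfl
    simp at hqc
  have hq₁ : 0 < q.length := Nat.pos_of_ne_zero fun h => hvu (eq_of_length_eq_zero h).symm
  set A := c.takeUntil v hvc
  set B := c.dropUntil v hvc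
  have hAB : A.append B = c := c.take_spec hvc
  have hlen : A.length + B.length = c.length := by rw [← length_append, hAB]
  have hAc : A.toSubgraph ≤ c.toSubgraph := hAB ▸ (toSubgraph_append A B).symm ▸ le_sup_left
  have hBc : B.toSubgraph ≤ c.toSubgraph := hAB ▸ (toSubgraph_append A B).symm ▸ le_sup_right
  have hqA : q.length < A.length := hqc.trans_le (dist_coe_le_length A hAc hu hv)
  have hqB : q.length < B.length :=
    (dist_comm ▸ hqc).trans_le (dist_coe_le_length B hBc hv hu)
  have hAH : ∀ w ∈ A.reverse.support, w ∈ c.toSubgraph.verts := fun w hw =>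
    c.mem_verts_toSubgraph.mpr <| c.support_takeUntil_subset_support hvc <| by simpa using hw
  have hBH : ∀ w ∈ B.support, w ∈ c.toSubgraph.verts := fun w hw =>
    c.mem_verts_toSubgraph.mpr <| c.support_dropUntil_subset_support hvc hw
  rcases le_total A.length B.length with hle | hle
  · refine ⟨q.append B, hq.isCycle_append_of_support_inter (hc.isPath_dropUntil hvc hvu)
      (by omega) fun w hwq hwB => hmeet w hwq (hBH w hwB), ?_, ?_⟩ <;>
      rw [length_append] <;> omega
  · refine ⟨q.append A.reverse, hq.isCycle_append_of_support_inter
      (hc.isPath_takeUntil hvc).reverse (by rw [length_reverse]; omega)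
        fun w hwq hwA => hmeet w hwq (hAH w hwA), ?_, ?_⟩ <;>
      rw [length_append, length_reverse] <;> omega

end SimpleGraph

/-- If `C ⊆ G` is a cycle and `P = x…y ⊆ G` is a path with
`x, y ∈ C` and `‖P‖ < d_C(x,y)`, then `G` has a cycle `C'` with
`|C|/2 < |C'| < |C|`. (For a cycle, the number of vertices equals the number of
edges, i.e. the length of the corresponding closed walk.) -/
theorem gallai_stmt5 {V : Type*} (G : SimpleGraph V) {w : V}
    (c : G.Walk w w) (hc : c.IsCycle)
    {x y : V} (p : G.Walk x y) (hp : p.IsPath)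
    (hx : x ∈ c.toSubgraph.verts) (hy : y ∈ c.toSubgraph.verts)
    (hshort : p.length < c.toSubgraph.coe.dist ⟨x, hx⟩ ⟨y, hy⟩) :
    ∃ (w' : V) (c' : G.Walk w' w'), c'.IsCycle ∧
      c.length < 2 * c'.length ∧ c'.length < c.length := by
  classical
  obtain ⟨x', y', hx', hy', q, hq, hqc, hmeet⟩ :=
    SimpleGraph.Subgraph.exists_isPath_shortcut c.toSubgraph_connected.coe p hp hx hy hshort
  have hx'c : x' ∈ c.support := c.mem_verts_toSubgraph.mp hx'
  obtain ⟨c', hc', hlen⟩ := (hc.rotate hx'c).exists_isCycle_of_isPath_shortcut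
    (c.toSubgraph_rotate hx'c) hx' hy' hq hqc hmeet
  exact ⟨x', c', hc', by simpa using hlen⟩
end

section
/- Let H be a graph on at most n vertices such that for all disjoint A, B ⊆ V(H) there is an A,B-connector in H of size at least min(|A|,|B|)/n^{1/3}. If C ⊆ H is a cycle with l := |C| > 4·n^{2/3} vertices, then H contains a cycle C′ with l/2 < |C′| < l. -/
open SimpleGraph

/-- A multigraph with vertex type `W` and edge type `F`: each edge has an
unordered pair of endpoints (possibly equal, giving a loop). -/
structure Multigraph (W : Type*) (F : Type*) where
  ends : F → Sym2 W

namespace Multigraph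

variable {W F : Type*}

/-- Adjacency in a multigraph. -/
def Adj (M : Multigraph W F) (u v : W) : Prop :=
  ∃ e : F, M.ends e = s(u, v)

/-- A multigraph is connected if it is nonempty and any two vertices are joined by a walk. -/
def Connected (M : Multigraph W F) : Prop :=
  Nonempty W ∧ ∀ u v : W, Relation.ReflTransGen M.Adj u v

/-- Delete the edge `e` from the multigraph `M`. -/
def deleteEdge (M : Multigraph W F) (e : F) : Multigraph W {f : F // f ≠ e} where
  ends f := M.ends f.1

/-- An edge of a (connected) multigraph is a cut-edge if deleting it disconnects
the multigraph. -/
def IsCutEdge (M : Multigraph W F) (e : F) : Prop :=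
  ¬ (M.deleteEdge e).Connected

end Multigraph

variable {V W F : Type*}

/-- `Q` is (the subgraph realizing) an `M`-subdivision inside the simple graph `G`:
there is an injective placement `b` of the branch vertices of `M`, and for each edge
`e` of `M` with ends `u e`, `v e` a path (a cycle, if `e` is a loop) of `G` joining
`b (u e)` to `b (v e)`; these paths are internally disjoint from each other and from
the branch vertices, are pairwise edge-disjoint, and their union is exactly `Q`. -/
def IsSubdivisionIn (M : Multigraph W F) (G : SimpleGraph V) (Q : G.Subgraph) : Prop :=
  ∃ (b : W → V) (u v : F → W) (P : ∀ e : F, G.Walk (b (u e)) (b (v e))),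
    Function.Injective b ∧
    (∀ e, M.ends e = s(u e, v e)) ∧
    (∀ e, ∀ h : u e = v e, ((P e).copy rfl (congrArg b h.symm)).IsCycle) ∧
    (∀ e, u e ≠ v e → (P e).IsPath) ∧
    (∀ e, ∀ x ∈ (P e).support, x ∈ Set.range b → x = b (u e) ∨ x = b (v e)) ∧
    (∀ e e', e ≠ e' → ∀ x, x ∈ (P e).support → x ∈ (P e').support → x ∈ Set.range b) ∧
    (∀ e e', e ≠ e' → ∀ a, a ∈ (P e).edges → a ∉ (P e').edges) ∧
    Q.verts = Set.range b ∪ ⋃ e, {x | x ∈ (P e).support} ∧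
    (∀ x y, Q.Adj x y ↔ ∃ e, (P e).toSubgraph.Adj x y)

/-- `Q` is a maximum `M`-subdivision among those contained in the subgraph `H` of `G`
(maximum with respect to the number of edges). -/
def IsMaxSubdivisionIn (M : Multigraph W F) (G : SimpleGraph V) (H Q : G.Subgraph) : Prop :=
  IsSubdivisionIn M G Q ∧ Q ≤ H ∧
    ∀ R : G.Subgraph, IsSubdivisionIn M G R → R ≤ H →
      R.edgeSet.ncard ≤ Q.edgeSet.ncard

/-- The family `L(M,H)` of maximum `M`-subdivisions in `H` is pairwise intersecting. -/
def PairwiseIntersectingIn (M : Multigraph W F) (G : SimpleGraph V) (H : G.Subgraph) : Prop :=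
  ∀ Q R : G.Subgraph, IsMaxSubdivisionIn M G H Q → IsMaxSubdivisionIn M G H R →
    (Q.verts ∩ R.verts).Nonempty

/-- `S` is a transversal of the family `L(M,H)` of maximum `M`-subdivisions in `H`. -/
def IsTransversalIn (M : Multigraph W F) (G : SimpleGraph V) (H : G.Subgraph)
    (S : Set V) : Prop :=
  ∀ Q : G.Subgraph, IsMaxSubdivisionIn M G H Q → (S ∩ Q.verts).Nonempty

/-- `(X, Y)` is an `H`-pretransversal: `Y ⊆ X ⊆ V(H)`, `n^{1/3}·|Y| ≤ |X|`
(where `n = |V(G)|`), and every maximum `M`-subdivision `Q` in `H` satisfies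
`Q ⊆ H − X` or `Q ∩ Y ≠ ∅`. -/
def IsPretransversal [Fintype V] (M : Multigraph W F) (G : SimpleGraph V)
    (H : G.Subgraph) (X Y : Set V) : Prop :=
  Y ⊆ X ∧ X ⊆ H.verts ∧
    (Fintype.card V : ℝ) ^ ((1 : ℝ) / 3) * (Y.ncard : ℝ) ≤ (X.ncard : ℝ) ∧
    ∀ Q : G.Subgraph, IsMaxSubdivisionIn M G H Q →
      Q ≤ H.deleteVerts X ∨ (Q.verts ∩ Y).Nonempty

/-- An `A,B`-connector of size `k` inside the subgraph `H` of `G`: `k` pairwise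
vertex-disjoint paths of `H`, each meeting `A` exactly in its first vertex and
meeting `B` exactly in its last vertex. -/
def IsConnector (G : SimpleGraph V) (H : G.Subgraph) (A B : Set V) (k : ℕ) : Prop :=
  ∃ (a : Fin k → V) (b : Fin k → V) (p : ∀ i : Fin k, G.Walk (a i) (b i)),
    (∀ i, (p i).IsPath) ∧
    (∀ i, (p i).toSubgraph ≤ H) ∧
    (∀ i, {x | x ∈ (p i).support} ∩ A = {a i}) ∧
    (∀ i, {x | x ∈ (p i).support} ∩ B = {b i}) ∧
    (∀ i j, i ≠ j → ∀ x, x ∈ (p i).support → x ∉ (p j).support)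

/-! Take two arcs `A`, `B` of `C` with `⌈l/4⌉` vertices each, about `l/4` apart along `C`.
Some `A,B`-path of a connector of size `≥ |A|/n^{1/3}` has fewer than `n^{4/3}/|A| < l/4`
vertices, so it is shorter than the distance of its ends along `C`. Splitting such a path at a
vertex of `C` keeps one half with this property, so eventually its interior avoids `C`; then it
closes up, with the longer of the two arcs of `C` between its ends, to a cycle of length in
`(l/2, l)`. -/

/-- The distance between positions `i` and `j` along a cycle of length `l`. -/
def cycDist (l i j : ℕ) : ℕ := ((j : ZMod l) - i).valMinAbs.natAbs

lemma cycDist_comm (l i j : ℕ) : cycDist l i j = cycDist l j i := by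
  rw [cycDist, cycDist, ← ZMod.natAbs_valMinAbs_neg, neg_sub]

lemma cycDist_triangle (l i j k : ℕ) : cycDist l i k ≤ cycDist l i j + cycDist l j k := by
  calc cycDist l i k = (((k : ZMod l) - j) + ((j : ZMod l) - i)).valMinAbs.natAbs := by
        rw [cycDist, sub_add_sub_cancel]
    _ ≤ cycDist l i j + cycDist l j k :=
        (ZMod.natAbs_valMinAbs_add_le _ _).trans ((Int.natAbs_add_le _ _).trans_eq (add_comm _ _))

lemma cycDist_eq_min {l i j : ℕ} (hij : i ≤ j) (hjl : j - i < l) :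
    cycDist l i j = min (j - i) (l - (j - i)) := by
  have : NeZero l := ⟨by omega⟩
  rw [cycDist, ← Nat.cast_sub hij, ZMod.valMinAbs_natAbs_eq_min, ZMod.val_natCast_of_lt hjl]

lemma cycDist_zero_self (l : ℕ) : cycDist l 0 l = 0 := by
  simp [cycDist]

namespace SimpleGraph.Walk

variable {G : SimpleGraph V} {u v : V}

lemma IsPath.isCycle_append_of_internallyDisjoint {p : G.Walk u v} {q : G.Walk v u}
    (hp : p.IsPath) (hq : q.IsPath) (hpq : ∀ z ∈ p.support, z ∈ q.support → z = u ∨ z = v)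
    (hlen : 1 < p.length ∨ 1 < q.length) : (p.append q).IsCycle := by
  refine hp.isCycle_append hq (fun z hzp hzq => ?_) hlen
  have hzu : z ≠ u := by
    rintro rfl
    exact (List.nodup_cons.mp (p.cons_tail_support ▸ hp.support_nodup)).1 hzp
  have hzv : z ≠ v := by
    rintro rfl
    exact (List.nodup_cons.mp (q.cons_tail_support ▸ hq.support_nodup)).1 hzq
  exact (hpq z (List.mem_of_mem_tail hzp) (List.mem_of_mem_tail hzq)).elim hzu hzv

lemma IsCycle.drop_append_take {c : G.Walk u u} (hc : c.IsCycle) (n : ℕ) :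
    ((c.drop n).append (c.take n)).IsCycle := by
  have hsplit := c.append_take_drop_eq n
  rw [isCycle_def] at hc ⊢
  obtain ⟨htrail, hne, hnodup⟩ := hc
  refine ⟨?_, ?_, ?_⟩
  · rw [isTrail_def, edges_append]
    rw [isTrail_def, ← hsplit, edges_append] at htrail
    exact List.perm_append_comm.nodup_iff.mp htrail
  · intro h
    apply hne
    have := congrArg length h
    simp only [length_append, drop_length, take_length, length_nil] at this
    exact eq_nil_iff_nil.mpr (length_eq_zero_iff.mp (by omega))
  · rw [tail_support_append]
    rw [← hsplit, tail_support_append] at hnodup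
    exact List.perm_append_comm.nodup_iff.mp hnodup

lemma getVert_drop_append_take (c : G.Walk u u) {i j : ℕ} (hij : i ≤ j) (hj : j ≤ c.length) :
    ((c.drop i).append (c.take i)).getVert (j - i) = c.getVert j := by
  rw [getVert_append, drop_length]
  split_ifs with h
  · rw [drop_getVert, Nat.add_sub_cancel' hij]
  · obtain rfl : j = c.length := by omega
    rw [Nat.sub_self, getVert_zero, getVert_length]

lemma length_drop_append_take (c : G.Walk u u) {i : ℕ} (hi : i ≤ c.length) :
    ((c.drop i).append (c.take i)).length = c.length := by
  rw [length_append, drop_length, take_length, min_eq_left hi, Nat.sub_add_cancel hi]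

lemma support_drop_append_take_subset (c : G.Walk u u) (i : ℕ) :
    ((c.drop i).append (c.take i)).support ⊆ c.support := fun z hz => by
  rcases (mem_support_append_iff _ _).mp hz with hz | hz
  · exact (c.isSubwalk_drop i).support_subset hz
  · exact (c.isSubwalk_take i).support_subset hz

lemma IsCycle.exists_cycle_of_path_to_getVert {r : G.Walk u u} (hr : r.IsCycle) {d : ℕ}
    (P : G.Walk u (r.getVert d)) (hP : P.IsPath)
    (hPr : ∀ z ∈ P.support, z ∈ r.support → z = u ∨ z = r.getVert d)
    (hd : P.length < d) (hld : P.length < r.length - d) :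
    ∃ (v : V) (c : G.Walk v v), c.IsCycle ∧ r.length < 2 * c.length ∧
      c.length < r.length := by
  have hP0 : P.length ≠ 0 := fun h =>
    have := (hr.getVert_endpoint_iff (i := d) (by omega)).mp (eq_of_length_eq_zero h).symm
    by omega
  rcases le_or_gt d (r.length - d) with hshort | hlong
  · refine ⟨u, P.append (r.drop d), ?_, ?_, ?_⟩
    · refine hP.isCycle_append_of_internallyDisjoint (hr.isPath_drop (by omega))
        (fun z hzP hzr => ?_) (by rw [drop_length]; omega)
      exact hPr z hzP ((r.isSubwalk_drop d).support_subset hzr)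
    all_goals rw [length_append, drop_length]; omega
  · refine ⟨u, (r.take d).append P.reverse, ?_, ?_, ?_⟩
    · refine (hr.isPath_take (by omega)).isCycle_append_of_internallyDisjoint hP.reverse
        (fun z hzr hzP => ?_) (by rw [take_length]; omega)
      exact hPr z (by simpa using hzP) ((r.isSubwalk_take d).support_subset hzr)
    all_goals rw [length_append, take_length, length_reverse]; omega

lemma IsCycle.exists_cycle_of_path_between_getVert {c : G.Walk u u} (hc : c.IsCycle) {i j : ℕ}
    (hij : i ≤ j) (hj : j ≤ c.length) (P : G.Walk (c.getVert i) (c.getVert j)) (hP : P.IsPath)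
    (hPc : ∀ z ∈ P.support, z ∈ c.support → z = c.getVert i ∨ z = c.getVert j)
    (hlt : P.length < cycDist c.length i j) :
    ∃ (v : V) (c' : G.Walk v v), c'.IsCycle ∧ c.length < 2 * c'.length ∧
      c'.length < c.length := by
  have hji : j - i < c.length := by
    by_contra!
    obtain ⟨rfl, rfl⟩ : i = 0 ∧ j = c.length := by omega
    rw [cycDist_zero_self] at hlt
    omega
  rw [cycDist_eq_min hij hji] at hlt
  have hr := hc.drop_append_take i
  have hend := c.getVert_drop_append_take hij hj
  have hlen := c.length_drop_append_take (i := i) (by omega)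
  rw [← hlen]
  refine hr.exists_cycle_of_path_to_getVert (d := j - i) (P.copy rfl hend.symm)
    ((isPath_copy ..).mpr hP) (fun z hzP hzr => ?_) (by rw [length_copy]; omega)
    (by rw [length_copy]; omega)
  rw [hend]
  exact hPc z (by simpa using hzP) (c.support_drop_append_take_subset i hzr)

theorem IsCycle.exists_cycle_of_short_path {c : G.Walk u u} (hc : c.IsCycle) {i j : ℕ}
    (hi : i ≤ c.length) (hj : j ≤ c.length) (P : G.Walk (c.getVert i) (c.getVert j))
    (hP : P.IsPath) (hlt : P.length < cycDist c.length i j) :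
    ∃ (v : V) (c' : G.Walk v v), c'.IsCycle ∧ c.length < 2 * c'.length ∧
      c'.length < c.length := by
  classical
  induction hn : P.length using Nat.strong_induction_on generalizing i j with
  | _ n ih =>
  by_cases hPc : ∀ z ∈ P.support, z ∈ c.support → z = c.getVert i ∨ z = c.getVert j
  · rcases le_total i j with hij | hji
    · exact hc.exists_cycle_of_path_between_getVert hij hj P hP hPc hlt
    · refine hc.exists_cycle_of_path_between_getVert hji hi P.reverse hP.reverse
        (fun z hz hzc => (hPc z (by simpa using hz) hzc).symm) ?_
      rwa [length_reverse, cycDist_comm]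
  · push Not at hPc
    obtain ⟨z, hzP, hzc, hzi, hzj⟩ := hPc
    obtain ⟨k, rfl, hk⟩ := mem_support_iff_exists_getVert.mp hzc
    have hsplit := congrArg length (P.take_spec hzP)
    rw [length_append] at hsplit
    have := cycDist_triangle c.length i k j
    by_cases hfirst : (P.takeUntil _ hzP).length < cycDist c.length i k
    · exact ih _ (hn ▸ length_takeUntil_lt_length hzP hzj) hi hk _ (hP.takeUntil hzP) hfirst rfl
    · exact ih _ (hn ▸ length_dropUntil_lt_length hzP hzi) hk hj _ (hP.dropUntil hzP)
        (by omega) rfl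

lemma IsCycle.exists_far_apart_arcs {c : G.Walk u u} (hc : c.IsCycle) :
    ∃ A B : Set V, Disjoint A B ∧ c.length ≤ 4 * A.ncard ∧ B.ncard = A.ncard ∧
      ∀ x ∈ A, ∀ y ∈ B, ∃ i j, i ≤ c.length ∧ j ≤ c.length ∧ c.getVert i = x ∧
        c.getVert j = y ∧ c.length ≤ 4 * cycDist c.length i j + 1 := by
  have hl := hc.three_le_length
  set a := (c.length + 3) / 4
  set g := (c.length - 2 * a) / 2
  have hinj : Set.InjOn c.getVert (Set.Iio c.length) :=
    hc.getVert_injOn'.mono fun i (hi : i < c.length) => show i ≤ c.length - 1 by omega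
  have hsA : Set.Iio a ⊆ Set.Iio c.length := fun i (hi : i < a) => show i < c.length by omega
  have hsB : Set.Ico (a + g) (2 * a + g) ⊆ Set.Iio c.length := fun i hi =>
    show i < c.length by have := hi.2; omega
  refine ⟨c.getVert '' Set.Iio a, c.getVert '' Set.Ico (a + g) (2 * a + g), ?_, ?_, ?_, ?_⟩
  · refine Disjoint.image (Set.disjoint_left.mpr fun i hi hi' => ?_) hinj hsA hsB
    simp only [Set.mem_Iio, Set.mem_Ico] at hi hi'
    omega
  · rw [(hinj.mono hsA).ncard_image, Set.ncard_Iio_nat]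
    omega
  · rw [(hinj.mono hsA).ncard_image, (hinj.mono hsB).ncard_image, Set.ncard_Iio_nat,
      Set.ncard_Ico_nat]
    omega
  · rintro _ ⟨i, hi, rfl⟩ _ ⟨j, hj, rfl⟩
    simp only [Set.mem_Iio, Set.mem_Ico] at hi hj
    refine ⟨i, j, by omega, by omega, rfl, rfl, ?_⟩
    rw [cycDist_eq_min (by omega) (by omega)]
    omega

end SimpleGraph.Walk

lemma SimpleGraph.exists_card_mul_length_succ_le_card [Fintype V] {G : SimpleGraph V}
    {ι : Type*} [Fintype ι] [Nonempty ι] {a b : ι → V} (p : ∀ i, G.Walk (a i) (b i))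
    (hp : ∀ i, (p i).IsPath)
    (hdisj : ∀ i j, i ≠ j → ∀ x ∈ (p i).support, x ∉ (p j).support) :
    ∃ i, Fintype.card ι * ((p i).length + 1) ≤ Fintype.card V := by
  classical
  obtain ⟨i, -, hmin⟩ := Finset.exists_min_image Finset.univ (fun i => (p i).length)
    Finset.univ_nonempty
  refine ⟨i, ?_⟩
  calc Fintype.card ι * ((p i).length + 1)
      ≤ ∑ j, ((p j).length + 1) := by
        rw [← smul_eq_mul, ← Finset.card_univ]
        exact Finset.card_nsmul_le_sum _ _ _ fun j _ => by simp [hmin j]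
    _ = ∑ j, (p j).support.toFinset.card := by
        congr! with j
        rw [List.toFinset_card_of_nodup (hp j).support_nodup, SimpleGraph.Walk.length_support]
    _ = (Finset.univ.biUnion fun j => (p j).support.toFinset).card :=
        (Finset.card_biUnion fun j _ j' _ hjj' => Finset.disjoint_left.mpr fun x hx hx' =>
          hdisj j j' hjj' x (List.mem_toFinset.mp hx) (List.mem_toFinset.mp hx')).symm
    _ ≤ Fintype.card V := Finset.card_le_univ _

lemma IsConnector.exists_short_path [Fintype V] {G : SimpleGraph V} {H : G.Subgraph}
    {A B : Set V} {k : ℕ} (h : IsConnector G H A B k) (hk : 0 < k) :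
    ∃ x ∈ A, ∃ y ∈ B, ∃ P : G.Walk x y,
      P.IsPath ∧ k * (P.length + 1) ≤ Fintype.card V := by
  obtain ⟨a, b, p, hp, -, hA, hB, hdisj⟩ := h
  have : Nonempty (Fin k) := ⟨⟨0, hk⟩⟩
  obtain ⟨i, hi⟩ := SimpleGraph.exists_card_mul_length_succ_le_card p hp hdisj
  refine ⟨a i, ((hA i).symm.subset rfl).2, b i, ((hB i).symm.subset rfl).2, p i, hp i, ?_⟩
  simpa using hi

lemma lt_sq_of_mul_le_cube {N a k m : ℝ} (hN : 0 < N) (hm : 0 ≤ m) (hkm : k * m ≤ N ^ 3)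
    (hak : a / N ≤ k) (ha : N ^ 2 < a) : m < N ^ 2 := by
  rw [div_le_iff₀ hN] at hak
  rcases hm.eq_or_lt with rfl | hm
  · positivity
  · nlinarith [mul_le_mul_of_nonneg_left hak hm.le]

/-- Suppose `H` has at most `n` vertices and for all disjoint
`A, B ⊆ V(H)` there is an `A,B`-connector in `H` of size at least
`min(|A|,|B|)/n^{1/3}`. If `C ⊆ H` is a cycle with `l := |C| > 4·n^{2/3}` vertices,
then `H` contains a cycle `C'` with `l/2 < |C'| < l`. -/
theorem gallai_stmt10 {V : Type*} [Fintype V] (n : ℕ) (H : SimpleGraph V)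
    (hcard : Fintype.card V ≤ n)
    (hconn : ∀ A B : Set V, Disjoint A B → ∃ k : ℕ, IsConnector H ⊤ A B k ∧
      (min A.ncard B.ncard : ℝ) / (n : ℝ) ^ ((1 : ℝ) / 3) ≤ (k : ℝ))
    {w : V} (c : H.Walk w w) (hc : c.IsCycle)
    (hlen : 4 * (n : ℝ) ^ ((2 : ℝ) / 3) < (c.length : ℝ)) :
    ∃ (w' : V) (c' : H.Walk w' w'), c'.IsCycle ∧
      c.length < 2 * c'.length ∧ c'.length < c.length := by
  obtain ⟨A, B, hAB, hA, hBA, hfar⟩ := hc.exists_far_apart_arcs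
  obtain ⟨k, hk, hkA⟩ := hconn A B hAB
  rw [hBA, min_self] at hkA
  set N := (n : ℝ) ^ ((1 : ℝ) / 3)
  have hN : 0 < N := Real.rpow_pos_of_pos
    (by exact_mod_cast (Fintype.card_pos_iff.mpr ⟨w⟩).trans_le hcard) _
  have hN3 : N ^ 3 = n := by
    rw [← Real.rpow_natCast, ← Real.rpow_mul (Nat.cast_nonneg n)]; norm_num
  have hN2 : (n : ℝ) ^ ((2 : ℝ) / 3) = N ^ 2 := by
    rw [← Real.rpow_natCast, ← Real.rpow_mul (Nat.cast_nonneg n)]; norm_num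
  have hAN : N ^ 2 < A.ncard := by
    have : (c.length : ℝ) ≤ 4 * A.ncard := by exact_mod_cast hA
    linarith
  have hk0 : 0 < k := by
    exact_mod_cast (div_pos ((by positivity : 0 < N ^ 2).trans hAN) hN).trans_le hkA
  obtain ⟨x, hx, y, hy, P, hP, hPk⟩ := hk.exists_short_path hk0
  have hPN : ((P.length + 1 : ℕ) : ℝ) < N ^ 2 := lt_sq_of_mul_le_cube hN (Nat.cast_nonneg _)
    (by rw [hN3]; exact_mod_cast hPk.trans hcard) hkA hAN
  have hPl : 4 * (P.length + 1) < c.length := by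
    have : ((4 * (P.length + 1) : ℕ) : ℝ) < c.length := by push_cast at hPN ⊢; linarith
    exact_mod_cast this
  obtain ⟨i, j, hi, hj, rfl, rfl, hij⟩ := hfar x hx y hy
  exact hc.exists_cycle_of_short_path hi hj P hP (by omega)
end

section
/- Let M be a connected multigraph, let G be a graph on n vertices, let (X,Y) be a G-pretransversal, and set H := G − X. If (X′,Y′) is an H-pretransversal (with the same parameter n = |V(G)|), then (X ∪ X′, Y ∪ Y′) is a G-pretransversal. -/
open SimpleGraph

variable {V W F : Type*}

/-- If `(X,Y)` is a `G`-pretransversal, `H := G − X`, and `(X',Y')`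
is an `H`-pretransversal, then `(X ∪ X', Y ∪ Y')` is a `G`-pretransversal. -/
theorem gallai_stmt13 {V W F : Type*} [Fintype V]
    (M : Multigraph W F) (hM : M.Connected) (G : SimpleGraph V)
    (X Y : Set V) (hXY : IsPretransversal M G ⊤ X Y)
    (X' Y' : Set V)
    (hXY' : IsPretransversal M G ((⊤ : G.Subgraph).deleteVerts X) X' Y') :
    IsPretransversal M G ⊤ (X ∪ X') (Y ∪ Y') := by
  obtain ⟨hYX, hXV, hcard, hQ⟩ := hXY
  obtain ⟨hYX', hXV', hcard', hQ'⟩ := hXY'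
  have hdisj : Disjoint X X' := by
    rw [Set.disjoint_left]
    intro a haX haX'
    have := hXV' haX'
    simp [SimpleGraph.Subgraph.deleteVerts] at this
    exact this haX
  refine ⟨Set.union_subset_union hYX hYX', by simp, ?_, ?_⟩
  · have h1 : ((Y ∪ Y').ncard : ℝ) ≤ (Y.ncard : ℝ) + (Y'.ncard : ℝ) := by
      exact_mod_cast Set.ncard_union_le Y Y'
    have h2 : ((X ∪ X').ncard : ℝ) = (X.ncard : ℝ) + (X'.ncard : ℝ) := by
      exact_mod_cast Set.ncard_union_eq hdisj (Set.toFinite _) (Set.toFinite _)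
    have hpow : (0:ℝ) ≤ (Fintype.card V : ℝ) ^ ((1 : ℝ) / 3) :=
      Real.rpow_nonneg (by positivity) _
    calc (Fintype.card V : ℝ) ^ ((1 : ℝ) / 3) * ((Y ∪ Y').ncard : ℝ)
        ≤ (Fintype.card V : ℝ) ^ ((1 : ℝ) / 3) * ((Y.ncard : ℝ) + (Y'.ncard : ℝ)) := by
          exact mul_le_mul_of_nonneg_left h1 hpow
      _ = (Fintype.card V : ℝ) ^ ((1 : ℝ) / 3) * (Y.ncard : ℝ)
          + (Fintype.card V : ℝ) ^ ((1 : ℝ) / 3) * (Y'.ncard : ℝ) := by ring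
      _ ≤ (X.ncard : ℝ) + (X'.ncard : ℝ) := add_le_add hcard hcard'
      _ = ((X ∪ X').ncard : ℝ) := h2.symm
  · intro Q hQmax
    rcases hQ Q hQmax with hle | hY
    · have hQmax' : IsMaxSubdivisionIn M G ((⊤ : G.Subgraph).deleteVerts X) Q :=
        ⟨hQmax.1, hle, fun R hR hRle =>
          hQmax.2.2 R hR (hRle.trans SimpleGraph.Subgraph.deleteVerts_le)⟩
      rcases hQ' Q hQmax' with hle' | hY'
      · left
        rwa [SimpleGraph.Subgraph.deleteVerts_deleteVerts] at hle'
      · right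
        exact hY'.mono (Set.inter_subset_inter_right _ Set.subset_union_right)
    · right
      exact hY.mono (Set.inter_subset_inter_right _ Set.subset_union_left)
end

section
/- Let M = K_{1,k} be a star (one center adjacent to k ≥ 1 leaves) and let G be a connected graph containing an M-subdivision. Then the family L(M,G) of maximum M-subdivisions in G is pairwise intersecting, i.e., any two maximum M-subdivisions in G share a vertex. -/
open SimpleGraph

variable {V W F : Type*}

/-- The star `K_{1,k}`: center `none` joined to each of the `k` leaves `some i`. -/
def starMultigraph (k : ℕ) : Multigraph (Option (Fin k)) (Fin k) where
  ends e := s(none, some e)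

/-!
If two maximum spiders `S` and `T` were disjoint, a shortest path in `G` between them would run
from a vertex `x` on a leg of `S` to a vertex `y` on a leg of `T`. Say the part of the leg of `S`
beyond `x` is at least as long as the part of the leg of `T` beyond `y`. Rerouting that leg of `T`
at `y` along the path and then along the rest of the leg of `S` yields a spider with more edges
than `T`, a contradiction.
-/

namespace SimpleGraph.Walk

variable {G : SimpleGraph V}

theorem IsPath.append {u v w : V} {p : G.Walk u v} {q : G.Walk v w} (hp : p.IsPath)
    (hq : q.IsPath) (h : ∀ x ∈ p.support, x ∈ q.support → x = v) : (p.append q).IsPath := by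
  rw [isPath_def, support_append]
  refine hp.support_nodup.append hq.support_nodup.tail fun x hxp hxq => ?_
  obtain rfl := h x hxp (List.mem_of_mem_tail hxq)
  have hnodup := hq.support_nodup
  rw [← cons_tail_support] at hnodup
  exact (List.nodup_cons.mp hnodup).1 hxq

theorem exists_isPath_toSubgraph_eq_of_sym2_eq {a b a' b' : V} (p : G.Walk a b) (hp : p.IsPath)
    (h : s(a, b) = s(a', b')) : ∃ q : G.Walk a' b', q.IsPath ∧ q.toSubgraph = p.toSubgraph := by
  rcases Sym2.eq_iff.mp h with ⟨rfl, rfl⟩ | ⟨rfl, rfl⟩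
  · exact ⟨p, hp, rfl⟩
  · exact ⟨p.reverse, hp.reverse, p.toSubgraph_reverse⟩

theorem exists_prefix_hitting_set (B : Set V) {a b : V} (w : G.Walk a b) (hb : b ∈ B) :
    ∃ y ∈ B, ∃ q : G.Walk a y,
      (∀ z ∈ q.support, z ∈ B → z = y) ∧ q.support ⊆ w.support := by
  induction w with
  | nil => exact ⟨_, hb, nil, by simp, List.Subset.refl _⟩
  | @cons a _ _ h w ih =>
    by_cases ha : a ∈ B
    · exact ⟨a, ha, nil, by simp, by simp⟩
    · obtain ⟨y, hy, q, hqB, hqw⟩ := ih hb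
      refine ⟨y, hy, cons h q, ?_, List.cons_subset_cons _ hqw⟩
      rintro z hz hzB
      rcases List.mem_cons.mp (support_cons h q ▸ hz) with rfl | hz
      · exact absurd hzB ha
      · exact hqB z hz hzB

theorem exists_isPath_between_sets (A B : Set V) {a b : V} (w : G.Walk a b) (ha : a ∈ A)
    (hb : b ∈ B) :
    ∃ x ∈ A, ∃ y ∈ B, ∃ p : G.Walk x y, p.IsPath ∧
      (∀ z ∈ p.support, z ∈ A → z = x) ∧ (∀ z ∈ p.support, z ∈ B → z = y) := by
  classical
  obtain ⟨y, hy, q, hqB, -⟩ := w.exists_prefix_hitting_set B hb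
  obtain ⟨x, hx, r, hrA, hrq⟩ := q.reverse.exists_prefix_hitting_set A ha
  have hsupp : ∀ z ∈ r.reverse.bypass.support, z ∈ r.support := fun z hz => by
    simpa using r.reverse.support_bypass_subset_support hz
  refine ⟨x, hx, y, hy, r.reverse.bypass, bypass_isPath _, fun z hz hzA => hrA z (hsupp z hz) hzA,
    fun z hz hzB => hqB z ?_ hzB⟩
  simpa using hrq (hsupp z hz)

end SimpleGraph.Walk

/-- A `K_{1,k}`-subdivision in `G`, presented by its `k` legs. -/
structure Spider (G : SimpleGraph V) (k : ℕ) where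
  center : V
  foot : Fin k → V
  leg : ∀ i, G.Walk center (foot i)
  isPath_leg : ∀ i, (leg i).IsPath
  foot_ne_center : ∀ i, foot i ≠ center
  eq_of_foot_mem_support : ∀ i j, foot j ∈ (leg i).support → j = i
  eq_center_of_mem_support :
    ∀ i j, i ≠ j → ∀ x ∈ (leg i).support, x ∈ (leg j).support → x = center

namespace Spider

variable {G : SimpleGraph V} {k : ℕ} (S : Spider G k)

def toSubgraph : G.Subgraph := ⨆ i, (S.leg i).toSubgraph

def size : ℕ := ∑ i, (S.leg i).length

@[simp]
theorem mem_verts_toSubgraph {z : V} :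
    z ∈ S.toSubgraph.verts ↔ ∃ i, z ∈ (S.leg i).support := by
  simp [toSubgraph]

theorem center_mem_verts_toSubgraph (hk : 0 < k) : S.center ∈ S.toSubgraph.verts :=
  S.mem_verts_toSubgraph.mpr ⟨⟨0, hk⟩, (S.leg _).start_mem_support⟩

theorem foot_mem_verts_toSubgraph (i : Fin k) : S.foot i ∈ S.toSubgraph.verts :=
  S.mem_verts_toSubgraph.mpr ⟨i, (S.leg i).end_mem_support⟩

theorem foot_injective : Function.Injective S.foot := fun i j h =>
  (S.eq_of_foot_mem_support i j (h ▸ (S.leg i).end_mem_support)).symm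

theorem not_mem_edges_of_mem_edges {i j : Fin k} (hij : i ≠ j) {e : Sym2 V}
    (hi : e ∈ (S.leg i).edges) : e ∉ (S.leg j).edges := by
  induction e using Sym2.ind with
  | _ x y =>
    intro hj
    have hx := S.eq_center_of_mem_support i j hij x
      ((S.leg i).fst_mem_support_of_mem_edges hi) ((S.leg j).fst_mem_support_of_mem_edges hj)
    have hy := S.eq_center_of_mem_support i j hij y
      ((S.leg i).snd_mem_support_of_mem_edges hi) ((S.leg j).snd_mem_support_of_mem_edges hj)
    subst hx hy
    exact G.irrefl ((S.leg i).adj_of_mem_edges hi)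

theorem ncard_edgeSet_toSubgraph : S.toSubgraph.edgeSet.ncard = S.size := by
  classical
  have hedges :
      S.toSubgraph.edgeSet = ↑(Finset.univ.biUnion fun i => (S.leg i).edges.toFinset) := by
    ext e
    simp [toSubgraph, Walk.edgeSet]
  rw [hedges, Set.ncard_coe_finset, Finset.card_biUnion]
  · refine Finset.sum_congr rfl fun i _ => ?_
    rw [List.toFinset_card_of_nodup (S.isPath_leg i).edges_nodup, Walk.length_edges]
  · intro i _ j _ hij
    rw [Function.onFun, Finset.disjoint_left]
    intro e hi hj
    exact S.not_mem_edges_of_mem_edges hij (List.mem_toFinset.mp hi) (List.mem_toFinset.mp hj)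

theorem isSubdivisionIn_toSubgraph (hk : 0 < k) :
    IsSubdivisionIn (starMultigraph k) G S.toSubgraph := by
  have hinj : Function.Injective fun o : Option (Fin k) => o.elim S.center S.foot := by
    rintro (_ | i) (_ | j) h
    · rfl
    · exact absurd h.symm (S.foot_ne_center j)
    · exact absurd h (S.foot_ne_center i)
    · exact congrArg some (S.foot_injective h)
  refine ⟨_, fun _ => none, some, S.leg, hinj, fun _ => rfl, by simp, fun i _ => S.isPath_leg i,
    ?_, ?_, fun i j hij _ => S.not_mem_edges_of_mem_edges hij, ?_, fun x y => ?_⟩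
  · rintro i x hx ⟨_ | j, rfl⟩
    · exact Or.inl rfl
    · exact Or.inr (by rw [S.eq_of_foot_mem_support i j hx])
  · exact fun i j hij x hi hj => ⟨none, (S.eq_center_of_mem_support i j hij x hi hj).symm⟩
  · have hrange : Set.range (fun o : Option (Fin k) => o.elim S.center S.foot) ⊆
        S.toSubgraph.verts := by
      rintro _ ⟨_ | i, rfl⟩
      · exact S.center_mem_verts_toSubgraph hk
      · exact S.foot_mem_verts_toSubgraph i
    ext z
    constructor
    · exact fun hz => Or.inr (by simpa using hz)
    · rintro (hz | hz)
      · exact hrange hz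
      · simpa using hz
  · simp [toSubgraph]

theorem exists_toSubgraph_eq (hk : 0 < k) {R : G.Subgraph}
    (hR : IsSubdivisionIn (starMultigraph k) G R) : ∃ S : Spider G k, S.toSubgraph = R := by
  obtain ⟨b, u, v, P, hb, hends, -, hpath, hbranch, hmeet, -, hverts, hadj⟩ := hR
  have hends' : ∀ e, s(none, some e) = s(u e, v e) := hends
  have hne : ∀ e, u e ≠ v e := fun e h => by
    obtain ⟨h₁, h₂⟩ : none = v e ∧ some e = v e := by simpa [h] using hends' e
    exact Option.some_ne_none e (h₂.trans h₁.symm)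
  have horient : ∀ e, ∃ q : G.Walk (b none) (b (some e)),
      q.IsPath ∧ q.toSubgraph = (P e).toSubgraph := fun e =>
    (P e).exists_isPath_toSubgraph_eq_of_sym2_eq (hpath e (hne e))
      (by simpa using congrArg (Sym2.map b) (hends' e).symm)
  choose Q hQ hQP using horient
  have hsupp : ∀ e z, z ∈ (Q e).support ↔ z ∈ (P e).support := fun e z => by
    rw [← Walk.mem_verts_toSubgraph, hQP e, Walk.mem_verts_toSubgraph]
  have hfoot : ∀ e n, b (some n) ∈ (P e).support → n = e := fun e n hn => by
    have hmem : some n ∈ s(u e, v e) := by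
      rcases hbranch e _ hn ⟨some n, rfl⟩ with h | h <;> simp [hb h]
    simpa [← hends' e] using hmem
  refine ⟨⟨b none, fun n => b (some n), Q, hQ, fun n h => by simpa using hb h,
    fun e n h => hfoot e n ((hsupp e _).mp h), ?_⟩, ?_⟩
  · intro e e' hee z hz hz'
    rw [hsupp] at hz hz'
    obtain ⟨_ | n, rfl⟩ := hmeet e e' hee z hz hz'
    · rfl
    · exact absurd ((hfoot e n hz).symm.trans (hfoot e' n hz')) hee
  · refine Subgraph.ext ?_ ?_
    · have hrange : Set.range b ⊆ ⋃ e, {x | x ∈ (P e).support} := by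
        rintro _ ⟨_ | n, rfl⟩
        · exact Set.mem_iUnion.mpr ⟨⟨0, hk⟩, (hsupp _ _).mp (Q _).start_mem_support⟩
        · exact Set.mem_iUnion.mpr ⟨n, (hsupp _ _).mp (Q n).end_mem_support⟩
      rw [hverts, Set.union_eq_self_of_subset_left hrange]
      ext z
      simp [hsupp]
    · ext x y
      simp [toSubgraph, hadj, hQP]

def replaceLeg (j : Fin k) {t : V} (p : G.Walk S.center t) (hp : p.IsPath)
    (ht : t ∉ S.toSubgraph.verts)
    (hpS : ∀ z ∈ p.support, z ∈ S.toSubgraph.verts → z ∈ (S.leg j).support) :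
    Spider G k where
  center := S.center
  foot := Function.update S.foot j t
  leg m := if h : m = j then p.copy rfl (by simp [h]) else (S.leg m).copy rfl (by simp [h])
  isPath_leg m := by
    split_ifs
    · simpa using hp
    · simpa using S.isPath_leg m
  foot_ne_center m := by
    by_cases hm : m = j
    · subst hm
      simp only [Function.update_self]
      rintro rfl
      exact ht (S.mem_verts_toSubgraph.mpr ⟨m, (S.leg m).start_mem_support⟩)
    · simpa [hm] using S.foot_ne_center m
  eq_of_foot_mem_support m n := by
    by_cases hm : m = j <;> by_cases hn : n = j
    · exact fun _ => hn.trans hm.symm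
    · subst hm
      simp only [dite_true, Walk.support_copy, Function.update_of_ne hn]
      exact fun h => absurd (S.eq_of_foot_mem_support m n
        (hpS _ h (S.foot_mem_verts_toSubgraph n))) hn
    · subst hn
      simp only [dif_neg hm, Walk.support_copy, Function.update_self]
      exact fun h => absurd (S.mem_verts_toSubgraph.mpr ⟨m, h⟩) ht
    · simpa [hm, hn] using S.eq_of_foot_mem_support m n
  eq_center_of_mem_support m n hmn x := by
    have hjS : ∀ i, i ≠ j → x ∈ p.support → x ∈ (S.leg i).support → x = S.center :=
      fun i hi hxp hxi => S.eq_center_of_mem_support j i (Ne.symm hi) x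
        (hpS x hxp (S.mem_verts_toSubgraph.mpr ⟨i, hxi⟩)) hxi
    by_cases hm : m = j <;> by_cases hn : n = j
    · exact absurd (hm.trans hn.symm) hmn
    · subst hm
      simpa [hn] using hjS n hn
    · subst hn
      simpa [hm] using fun hxm hxp => hjS m hm hxp hxm
    · simpa [hm, hn] using S.eq_center_of_mem_support m n hmn x

theorem size_replaceLeg_add (j : Fin k) {t : V} (p : G.Walk S.center t) (hp : p.IsPath)
    (ht : t ∉ S.toSubgraph.verts)
    (hpS : ∀ z ∈ p.support, z ∈ S.toSubgraph.verts → z ∈ (S.leg j).support) :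
    (S.replaceLeg j p hp ht hpS).size + (S.leg j).length = S.size + p.length := by
  have hlen : ∀ m, ((S.replaceLeg j p hp ht hpS).leg m).length =
      Function.update (fun i => (S.leg i).length) j p.length m := fun m => by
    by_cases hm : m = j
    · subst hm; simp [replaceLeg]
    · simp [replaceLeg, hm]
  simp only [size, hlen, Finset.sum_update_of_mem (Finset.mem_univ j)]
  rw [← Finset.add_sum_erase _ _ (Finset.mem_univ j), Finset.sdiff_singleton_eq_erase]
  ring

/-- `U` is `T` with leg `j` rerouted at `y` along `p` and then along the end of leg `i` of `S`. -/
theorem exists_size_gt_of_bridge [DecidableEq V] (S T : Spider G k)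
    (hST : Disjoint S.toSubgraph.verts T.toSubgraph.verts) {x y : V} (p : G.Walk y x)
    (hp : p.IsPath) {i j : Fin k} (hx : x ∈ (S.leg i).support) (hy : y ∈ (T.leg j).support)
    (hpS : ∀ z ∈ p.support, z ∈ S.toSubgraph.verts → z = x)
    (hpT : ∀ z ∈ p.support, z ∈ T.toSubgraph.verts → z = y)
    (hlen : ((T.leg j).dropUntil y hy).length ≤ ((S.leg i).dropUntil x hx).length) :
    ∃ U : Spider G k, T.size < U.size := by
  set head := (T.leg j).takeUntil y hy
  set tail := (S.leg i).dropUntil x hx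
  have htailS : ∀ z ∈ tail.support, z ∈ S.toSubgraph.verts := fun z hz =>
    S.mem_verts_toSubgraph.mpr ⟨i, (S.leg i).support_dropUntil_subset_support hx hz⟩
  have hheadT : ∀ z ∈ head.support, z ∈ (T.leg j).support := fun z hz =>
    (T.leg j).support_takeUntil_subset_support hy hz
  have hpath : (head.append (p.append tail)).IsPath := by
    refine ((T.isPath_leg j).takeUntil hy).append
      (hp.append ((S.isPath_leg i).dropUntil hx) fun z hzp hz => hpS z hzp (htailS z hz)) ?_
    intro z hz hz'
    have hzT : z ∈ T.toSubgraph.verts := T.mem_verts_toSubgraph.mpr ⟨j, hheadT z hz⟩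
    rcases (Walk.mem_support_append_iff _ _).mp hz' with hz' | hz'
    · exact hpT z hz' hzT
    · exact absurd hzT (hST.notMem_of_mem_left (htailS z hz'))
  have hmeet : ∀ z ∈ (head.append (p.append tail)).support, z ∈ T.toSubgraph.verts →
      z ∈ (T.leg j).support := by
    intro z hz hzT
    simp only [Walk.mem_support_append_iff] at hz
    rcases hz with hz | hz | hz
    · exact hheadT z hz
    · exact hpT z hz hzT ▸ hy
    · exact absurd hzT (hST.notMem_of_mem_left (htailS z hz))
  have hfoot : S.foot i ∉ T.toSubgraph.verts :=
    hST.notMem_of_mem_left (S.foot_mem_verts_toSubgraph i)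
  have hp_pos : 0 < p.length := Nat.pos_of_ne_zero fun h =>
    hST.notMem_of_mem_left (S.mem_verts_toSubgraph.mpr ⟨i, hx⟩)
      (p.eq_of_length_eq_zero h ▸ T.mem_verts_toSubgraph.mpr ⟨j, hy⟩)
  refine ⟨T.replaceLeg j _ hpath hfoot hmeet, ?_⟩
  have hsize := T.size_replaceLeg_add j _ hpath hfoot hmeet
  have hsplit : head.length + ((T.leg j).dropUntil y hy).length = (T.leg j).length := by
    rw [← Walk.length_append, Walk.take_spec]
  simp only [Walk.length_append] at hsize
  omega

theorem exists_size_gt_of_disjoint (hG : G.Preconnected) (hk : 0 < k) (S T : Spider G k)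
    (hST : Disjoint S.toSubgraph.verts T.toSubgraph.verts) :
    ∃ U : Spider G k, S.size < U.size ∨ T.size < U.size := by
  classical
  obtain ⟨w⟩ := hG S.center T.center
  obtain ⟨x, hxS, y, hyT, p, hp, hpS, hpT⟩ := w.exists_isPath_between_sets _ _
    (S.center_mem_verts_toSubgraph hk) (T.center_mem_verts_toSubgraph hk)
  obtain ⟨i, hx⟩ := S.mem_verts_toSubgraph.mp hxS
  obtain ⟨j, hy⟩ := T.mem_verts_toSubgraph.mp hyT
  rcases le_total ((T.leg j).dropUntil y hy).length ((S.leg i).dropUntil x hx).length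
    with hle | hle
  · refine (exists_size_gt_of_bridge S T hST p.reverse hp.reverse hx hy ?_ ?_ hle).imp
      fun _ => Or.inr
    · simpa using hpS
    · simpa using hpT
  · exact (exists_size_gt_of_bridge T S hST.symm p hp hy hx hpT hpS hle).imp fun _ => Or.inl

end Spider

theorem gallai_stmt15_general {V : Type*} (k : ℕ) (hk : 1 ≤ k)
    (G : SimpleGraph V) (hG : G.Connected) :
    PairwiseIntersectingIn (starMultigraph k) G ⊤ := by
  intro Q R hQ hR
  by_contra hQR
  obtain ⟨S, rfl⟩ := Spider.exists_toSubgraph_eq hk hQ.1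
  obtain ⟨T, rfl⟩ := Spider.exists_toSubgraph_eq hk hR.1
  obtain ⟨U, hU⟩ := Spider.exists_size_gt_of_disjoint hG.preconnected hk S T
    (Set.disjoint_iff_inter_eq_empty.mpr (Set.not_nonempty_iff_eq_empty.mp hQR))
  have hUS := hQ.2.2 U.toSubgraph (U.isSubdivisionIn_toSubgraph hk) le_top
  have hUT := hR.2.2 U.toSubgraph (U.isSubdivisionIn_toSubgraph hk) le_top
  simp only [Spider.ncard_edgeSet_toSubgraph] at hUS hUT
  omega

/-- If `M = K_{1,k}` is a star with `k ≥ 1` and `G` is a connected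
graph containing an `M`-subdivision, then `L(M,G)` is pairwise intersecting. -/
theorem gallai_stmt15 {V : Type*} [Fintype V] (k : ℕ) (hk : 1 ≤ k)
    (G : SimpleGraph V) (hG : G.Connected)
    (hex : ∃ Q : SimpleGraph.Subgraph G, IsSubdivisionIn (starMultigraph k) G Q) :
    PairwiseIntersectingIn (starMultigraph k) G ⊤ :=
  gallai_stmt15_general k hk G hG
end
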